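/- If the triple (O, π_leaf, π_node) is strongly decomposable, then for every type A, every relation R : A → A → Type, and any two double trees d₀, d₁ : Tree I (Tree I A), if Γ(Γ(R)) d₀ d₁ holds then Γ(R) (μ d₀) (μ d₁) holds. -/

import Mathlib

set_option autoImplicit false

universe u v w

/-! ### Tests -/

inductive Test (A : Type u) : Type u
  | atom (a : A)
  | tru
  | fls
  | and (t₁ t₂ : Test A)
  | or (t₁ t₂ : Test A)
  | all (ts : ℕ → Test A)
  | ex (ts : ℕ → Test A)

/-- Interpretation of tests as types. -/
def liftTest {A : Type u} (P : A → Type w) : Test A → Type w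
  | .atom a => P a
  | .tru => PUnit
  | .fls => PEmpty
  | .and t₁ t₂ => liftTest P t₁ × liftTest P t₂
  | .or t₁ t₂ => liftTest P t₁ ⊕ liftTest P t₂
  | .all ts => (n : ℕ) → liftTest P (ts n)
  | .ex ts => (n : ℕ) × liftTest P (ts n)

def mapTest {A : Type u} {B : Type v} (f : A → B) : Test A → Test B
  | .atom a => .atom (f a)
  | .tru => .tru
  | .fls => .fls
  | .and t₁ t₂ => .and (mapTest f t₁) (mapTest f t₂)
  | .or t₁ t₂ => .or (mapTest f t₁) (mapTest f t₂)
  | .all ts => .all (fun n => mapTest f (ts n))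
  | .ex ts => .ex (fun n => mapTest f (ts n))

/-- The dual of a test. -/
def dualTest {A : Type u} : Test A → Test A
  | .atom a => .atom a
  | .tru => .fls
  | .fls => .tru
  | .and t₁ t₂ => .or (dualTest t₁) (dualTest t₂)
  | .or t₁ t₂ => .and (dualTest t₁) (dualTest t₂)
  | .all ts => .ex (fun n => dualTest (ts n))
  | .ex ts => .all (fun n => dualTest (ts n))

/-! ### Coinductive trees, as an M-type -/

def CTreeP (K : Type) (I : K → Type) (A : Type v) : PFunctor.{v} :=
  ⟨A ⊕ ULift.{v} K, Sum.elim (fun _ => PEmpty.{v+1}) (fun k => ULift.{v} (I k.down))⟩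

/-- Coinductive trees with `A`-labelled leaves and `K`-labelled nodes of arity `I k`. -/
def CTree (K : Type) (I : K → Type) (A : Type v) : Type v := (CTreeP K I A).M

namespace CTree

variable {K : Type} {I : K → Type} {A : Type v}

def leaf (a : A) : CTree K I A :=
  PFunctor.M.mk ⟨Sum.inl a, fun e => e.elim⟩

def node (k : K) (ts : I k → CTree K I A) : CTree K I A :=
  PFunctor.M.mk ⟨Sum.inr ⟨k⟩, fun i => ts i.down⟩

/-- Monad multiplication on trees: `mu (leaf t) = t`, `mu (node k ts) = node k (mu ∘ ts)`. -/
def mu (d : CTree K I (CTree K I A)) : CTree K I A :=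
  PFunctor.M.corec
    (fun (s : CTree K I (CTree K I A) ⊕ CTree K I A) =>
      match s with
      | Sum.inl d' =>
          match PFunctor.M.dest d' with
          | ⟨Sum.inl t, _⟩ =>
              (match PFunctor.M.dest t with
              | ⟨Sum.inl a, _⟩ => ⟨Sum.inl a, fun e => e.elim⟩
              | ⟨Sum.inr k, ts⟩ => ⟨Sum.inr k, fun i => Sum.inr (ts i)⟩)
          | ⟨Sum.inr k, ds⟩ => ⟨Sum.inr k, fun i => Sum.inl (ds i)⟩
      | Sum.inr t =>
          match PFunctor.M.dest t with
          | ⟨Sum.inl a, _⟩ => ⟨Sum.inl a, fun e => e.elim⟩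
          | ⟨Sum.inr k, ts⟩ => ⟨Sum.inr k, fun i => Sum.inr (ts i)⟩)
    (Sum.inl d)

end CTree
/-! ### The inductive predicate lifting α -/

section PredLift

variable {K : Type} {I : K → Type} {O : Type}

mutual
  /-- The inductive algebra `α`, parametrized directly by the leaf predicate `P`:
      `Alpha πl πn P o t` corresponds to `α o (mapTree P t)` in the paper. -/
  inductive Alpha {K : Type} {I : K → Type} {O : Type}
      (πl : O → Bool) (πn : (k : K) → O → Test (I k × O))
      {A : Type v} (P : A → Type w) : O → CTree K I A → Type (max v w)
    | leaf {o : O} {a : A} (b : πl o = true) (p : P a) :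
        Alpha πl πn P o (CTree.leaf a)
    | node {o : O} {k : K} {Ps : I k → CTree K I A}
        (ps : AlphaT πl πn P (πn k o) Ps) :
        Alpha πl πn P o (CTree.node k Ps)

  /-- Inductive presentation of `liftTest (fun (x, o') => Alpha πl πn P o' (Ps x)) s`. -/
  inductive AlphaT {K : Type} {I : K → Type} {O : Type}
      (πl : O → Bool) (πn : (k : K) → O → Test (I k × O))
      {A : Type v} (P : A → Type w) :
      {k : K} → Test (I k × O) → (I k → CTree K I A) → Type (max v w)
    | atom {k : K} {x : I k} {o : O} {Ps : I k → CTree K I A}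
        (p : Alpha πl πn P o (Ps x)) : AlphaT πl πn P (.atom (x, o)) Ps
    | tru {k : K} {Ps : I k → CTree K I A} : AlphaT πl πn P .tru Ps
    | and {k : K} {t₁ t₂ : Test (I k × O)} {Ps : I k → CTree K I A}
        (p₁ : AlphaT πl πn P t₁ Ps) (p₂ : AlphaT πl πn P t₂ Ps) :
        AlphaT πl πn P (.and t₁ t₂) Ps
    | orl {k : K} {t₁ t₂ : Test (I k × O)} {Ps : I k → CTree K I A}
        (p : AlphaT πl πn P t₁ Ps) : AlphaT πl πn P (.or t₁ t₂) Ps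
    | orr {k : K} {t₁ t₂ : Test (I k × O)} {Ps : I k → CTree K I A}
        (p : AlphaT πl πn P t₂ Ps) : AlphaT πl πn P (.or t₁ t₂) Ps
    | all {k : K} {ts : ℕ → Test (I k × O)} {Ps : I k → CTree K I A}
        (ps : (n : ℕ) → AlphaT πl πn P (ts n) Ps) : AlphaT πl πn P (.all ts) Ps
    | ex {k : K} {ts : ℕ → Test (I k × O)} {Ps : I k → CTree K I A}
        (n : ℕ) (p : AlphaT πl πn P (ts n) Ps) : AlphaT πl πn P (.ex ts) Ps
end

/-- The inductive `O`-indexed predicate lifting. -/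
def liftTree (πl : O → Bool) (πn : (k : K) → O → Test (I k × O))
    (o : O) {A : Type v} (P : A → Type w) (t : CTree K I A) : Type (max v w) :=
  Alpha πl πn P o t

/-! ### The coinductive predicate lifting β, encoded as an M-type of raw proof
trees carrying a (coinductively defined) well-formedness invariant. -/

/-- Selections through a test: the container shapes of `liftTest`. -/
inductive Sel {X : Type} : Test X → Type
  | atom (x : X) : Sel (.atom x)
  | tru : Sel .tru
  | and {t₁ t₂ : Test X} (c₁ : Sel t₁) (c₂ : Sel t₂) : Sel (.and t₁ t₂)
  | orl {t₁ t₂ : Test X} (c : Sel t₁) : Sel (.or t₁ t₂)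
  | orr {t₁ t₂ : Test X} (c : Sel t₂) : Sel (.or t₁ t₂)
  | all {ts : ℕ → Test X} (cs : (n : ℕ) → Sel (ts n)) : Sel (.all ts)
  | ex {ts : ℕ → Test X} (n : ℕ) (c : Sel (ts n)) : Sel (.ex ts)

/-- The atoms reached by a selection, with their labels:
`liftTest Q s ≃ Σ c : Sel s, ∀ x, Sel.At c x → Q x`. -/
inductive Sel.At {X : Type} : {s : Test X} → Sel s → X → Type
  | atom (x : X) : Sel.At (.atom x) x
  | andl {t₁ t₂ : Test X} {c₁ : Sel t₁} {c₂ : Sel t₂} {x : X}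
      (h : Sel.At c₁ x) : Sel.At (.and c₁ c₂) x
  | andr {t₁ t₂ : Test X} {c₁ : Sel t₁} {c₂ : Sel t₂} {x : X}
      (h : Sel.At c₂ x) : Sel.At (.and c₁ c₂) x
  | orl {t₁ t₂ : Test X} {c : Sel t₁} {x : X}
      (h : Sel.At c x) : Sel.At (.orl (t₂ := t₂) c) x
  | orr {t₁ t₂ : Test X} {c : Sel t₂} {x : X}
      (h : Sel.At c x) : Sel.At (.orr (t₁ := t₁) c) x
  | all {ts : ℕ → Test X} {cs : (n : ℕ) → Sel (ts n)} (n : ℕ) {x : X}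
      (h : Sel.At (cs n) x) : Sel.At (.all cs) x
  | ex {ts : ℕ → Test X} {n : ℕ} {c : Sel (ts n)} {x : X}
      (h : Sel.At c x) : Sel.At (.ex n c) x

variable (πl : O → Bool) (πn : (k : K) → O → Test (I k × O))

/-- Shapes of raw proof trees for the coinductive lifting specified by `(πl, πn)`:
either leaf evidence (a proof of the leaf predicate, or evidence that the
observation is not correct for termination), or a selection through the test
at a node. -/
def BetaShape {A : Type v} (P : A → Type w) : Type (max v w) :=
  (Σ' (o : O) (a : A), PSum (P a) (πl o = false)) ⊕ (Σ' (k : K) (o : O), Sel (πn k o))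

end PredLift
section Beta

variable {K : Type} {I : K → Type} {O : Type}
variable (πl : O → Bool) (πn : (k : K) → O → Test (I k × O))

/-- The polynomial functor of raw proof trees for the coinductive lifting. -/
def BetaPF {A : Type v} (P : A → Type w) : PFunctor.{max v w} :=
  ⟨BetaShape πl πn P,
   Sum.elim (fun _ => PEmpty.{(max v w)+1})
     (fun s => ULift.{max v w} ((x : I s.1 × O) × Sel.At s.2.2 x))⟩

/-- Raw (coinductive) proof trees for the coinductive lifting. -/
def BetaPf {A : Type v} (P : A → Type w) : Type (max v w) := (BetaPF πl πn P).M

/-- One step of well-formedness of a raw proof tree with respect to an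
observation and a tree. -/
def BetaWFStep {A : Type v} (P : A → Type w)
    (R : BetaPf πl πn P → O → CTree K I A → Prop)
    (pf : BetaPf πl πn P) (o : O) (t : CTree K I A) : Prop :=
  match PFunctor.M.dest pf, PFunctor.M.dest t with
  | ⟨Sum.inl ⟨o', a', _⟩, _⟩, ⟨Sum.inl a, _⟩ => o' = o ∧ a' = a
  | ⟨Sum.inr ⟨k', o', c⟩, ch⟩, ⟨Sum.inr k, ts⟩ =>
      o' = o ∧ ∃ h : k' = k.down,
        ∀ (x : I k' × O) (hx : Sel.At c x),
          R (ch ⟨⟨x, hx⟩⟩) x.2 (ts ⟨h ▸ x.1⟩)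
  | _, _ => False

/-- Well-formedness (the coinductive component of `β`), as a greatest fixed
point: an invariant closed under one-step unfolding. -/
def BetaWF {A : Type v} (P : A → Type w)
    (pf : BetaPf πl πn P) (o : O) (t : CTree K I A) : Prop :=
  ∃ R : BetaPf πl πn P → O → CTree K I A → Prop,
    (∀ pf o t, R pf o t → BetaWFStep πl πn P R pf o t) ∧ R pf o t

/-- The coinductive algebra `β` specified by `(πl, πn)`, parametrized directly
by the leaf predicate `P`: `Beta πl πn P o t` corresponds to
`β o (mapTree P t)` in the paper. -/
def Beta {A : Type v} (P : A → Type w) (o : O) (t : CTree K I A) : Type (max v w) :=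
  Σ' pf : BetaPf πl πn P, BetaWF πl πn P pf o t

/-- The coinductive `O`-indexed predicate lifting, forming a complementing
pair with `liftTree`: it is specified by `πl` and the dual of `πn`. -/
def coliftTree (o : O) {A : Type v} (P : A → Type w) (t : CTree K I A) : Type (max v w) :=
  Beta πl (fun k o' => dualTest (πn k o')) P o t

end Beta
section Gamma

variable {K : Type} {I : K → Type} {O : Type}

/-- `R`-correctness of a predicate. -/
def RCorrect {A : Type v} (R : A → A → Type u) (f : A → Type) : Type (max v u) :=
  ∀ a b, f a → R a b → f b

variable (πl : O → Bool) (πn : (k : K) → O → Test (I k × O))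

/-- The relation lifting `Γ`. -/
def Gamma {A : Type v} (R : A → A → Type u) (t₀ t₁ : CTree K I A) : Type (max v u 1) :=
  ∀ (f : A → Type), RCorrect R f → ∀ o : O,
    (liftTree πl πn o f t₀ → liftTree πl πn o f t₁) ×
    (coliftTree πl πn o f t₀ → coliftTree πl πn o f t₁)

end Gamma

section Lang

variable (K : Type) (I : K → Type) (O : Type)

inductive Ty : Type
  | nat
  | arrow (σ ρ : Ty)
  | prod (σ ρ : Ty)
  | u (σ : Ty)

def Val : Ty → Type
  | .nat => ℕ
  | .arrow σ ρ => Val σ → CTree K I (Val ρ)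
  | .prod σ ρ => Val σ × Val ρ
  | .u σ => CTree K I (Val σ)

def Cpt (σ : Ty) : Type := CTree K I (Val K I σ)

inductive Srt : Type
  | val
  | cpt

def Tm : Srt → Ty → Type
  | .val, σ => Val K I σ
  | .cpt, σ => Cpt K I σ

mutual
  /-- Behavioural formulae. -/
  inductive Form : Srt → Ty → Type
    | eq (n : ℕ) : Form .val .nat
    | neq (n : ℕ) : Form .val .nat
    | mapsto {σ ρ : Ty} (V : Val K I σ) (φ : Form .cpt ρ) : Form .val (.arrow σ ρ)
    | fst {σ ρ : Ty} (φ : Form .val σ) : Form .val (.prod σ ρ)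
    | snd {σ ρ : Ty} (φ : Form .val ρ) : Form .val (.prod σ ρ)
    | thunk {σ : Ty} (φ : Form .cpt σ) : Form .val (.u σ)
    | test {b : Srt} {σ : Ty} (φs : FTest b σ) : Form b σ
    | obsA {σ : Ty} (o : O) (φ : Form .val σ) : Form .cpt σ
    | obsB {σ : Ty} (o : O) (φ : Form .val σ) : Form .cpt σ

  /-- Tests of formulae: the grammar `Test` instantiated at `Form b σ`
  (inlined, as Lean does not accept the nested occurrence). -/
  inductive FTest : Srt → Ty → Type
    | atom {b : Srt} {σ : Ty} (φ : Form b σ) : FTest b σ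
    | tru {b : Srt} {σ : Ty} : FTest b σ
    | fls {b : Srt} {σ : Ty} : FTest b σ
    | and {b : Srt} {σ : Ty} (t₁ t₂ : FTest b σ) : FTest b σ
    | or {b : Srt} {σ : Ty} (t₁ t₂ : FTest b σ) : FTest b σ
    | all {b : Srt} {σ : Ty} (ts : ℕ → FTest b σ) : FTest b σ
    | ex {b : Srt} {σ : Ty} (ts : ℕ → FTest b σ) : FTest b σ
end

end Lang

section Neg

variable {K : Type} {I : K → Type} {O : Type}

/-- `FTest b σ` realizes `Test (Form b σ)`. -/
def toFTest {b : Srt} {σ : Ty} : Test (Form K I O b σ) → FTest K I O b σ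
  | .atom φ => .atom φ
  | .tru => .tru
  | .fls => .fls
  | .and t₁ t₂ => .and (toFTest t₁) (toFTest t₂)
  | .or t₁ t₂ => .or (toFTest t₁) (toFTest t₂)
  | .all ts => .all (fun n => toFTest (ts n))
  | .ex ts => .ex (fun n => toFTest (ts n))

/-- The formula `test φs` for a test of formulae `φs : Test (Form b σ)`. -/
def Form.mkTest {b : Srt} {σ : Ty} (φs : Test (Form K I O b σ)) : Form K I O b σ :=
  .test (toFTest φs)

mutual
  /-- Negation of formulae. -/
  def negFma : {b : Srt} → {σ : Ty} → Form K I O b σ → Form K I O b σ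
    | _, _, .eq n => .neq n
    | _, _, .neq n => .eq n
    | _, _, .mapsto V φ => .mapsto V (negFma φ)
    | _, _, .fst φ => .fst (negFma φ)
    | _, _, .snd φ => .snd (negFma φ)
    | _, _, .thunk φ => .thunk (negFma φ)
    | _, _, .test φs => .test (negFTest φs)
    | _, _, .obsA o φ => .obsB o (negFma φ)
    | _, _, .obsB o φ => .obsA o (negFma φ)

  /-- The action of `mapTest negFma` on tests of formulae. -/
  def negFTest : {b : Srt} → {σ : Ty} → FTest K I O b σ → FTest K I O b σ
    | _, _, .atom φ => .atom (negFma φ)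
    | _, _, .tru => .tru
    | _, _, .fls => .fls
    | _, _, .and t₁ t₂ => .and (negFTest t₁) (negFTest t₂)
    | _, _, .or t₁ t₂ => .or (negFTest t₁) (negFTest t₂)
    | _, _, .all ts => .all (fun n => negFTest (ts n))
    | _, _, .ex ts => .ex (fun n => negFTest (ts n))
end

end Neg
section Sat

variable {K : Type} {I : K → Type} {O : Type}
variable (πl : O → Bool) (πn : (k : K) → O → Test (I k × O))

mutual
  /-- Satisfaction of formulae by terms: `Sat πl πn φ P` is `P ⊨ φ`. -/
  def Sat : {b : Srt} → {σ : Ty} → Form K I O b σ → Tm K I b σ → Type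
    | _, _, .eq n, m => PLift (m = n)
    | _, _, .neq n, m => PLift (m ≠ n)
    | _, _, .mapsto V φ, W => Sat φ (W V)
    | _, _, .fst φ, p => Sat φ p.1
    | _, _, .snd φ, p => Sat φ p.2
    | _, _, .thunk φ, V => Sat (b := .cpt) φ V
    | _, _, .test φs, P => SatTest φs P
    | _, _, .obsA o φ, M => liftTree πl πn o (fun V => Sat φ V) M
    | _, _, .obsB o φ, M => coliftTree πl πn o (fun V => Sat φ V) M

  /-- Satisfaction of tests of formulae: realizes `liftTest (fun φ => Sat πl πn φ P) φs`. -/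
  def SatTest : {b : Srt} → {σ : Ty} → FTest K I O b σ → Tm K I b σ → Type
    | _, _, .atom φ, P => Sat φ P
    | _, _, .tru, _ => PUnit
    | _, _, .fls, _ => PEmpty
    | _, _, .and t₁ t₂, P => SatTest t₁ P × SatTest t₂ P
    | _, _, .or t₁ t₂, P => SatTest t₁ P ⊕ SatTest t₂ P
    | _, _, .all ts, P => (n : ℕ) → SatTest (ts n) P
    | _, _, .ex ts, P => (n : ℕ) × SatTest (ts n) P
end

end Sat
section Decomp

variable {K : Type} {I : K → Type} {O : Type}
variable (πl : O → Bool) (πn : (k : K) → O → Test (I k × O))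

/-- The algebra `α` on trees of types. -/
def algA (o : O) (t : CTree K I Type) : Type 1 :=
  Alpha πl πn (fun X => X) o t

/-- The algebra `β` on trees of types (as part of the complementing pair, it
is specified by `πl` and the dual of `πn`). -/
def algB (o : O) (t : CTree K I Type) : Type 1 :=
  coliftTree πl πn o (fun X => X) t

/-- The extensional order `⊑` on double trees. -/
def DTLe (d₀ d₁ : CTree K I (CTree K I Type)) : Type 1 :=
  ∀ o₀ o₁ : O,
    (liftTree πl πn o₀ (algA πl πn o₁) d₀ → liftTree πl πn o₀ (algA πl πn o₁) d₁) ×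
    (coliftTree πl πn o₀ (algB πl πn o₁) d₀ → coliftTree πl πn o₀ (algB πl πn o₁) d₁)

/-- The extensional order `⊑` on single trees. -/
def STLe (t₀ t₁ : CTree K I Type) : Type 1 :=
  ∀ o : O, (algA πl πn o t₀ → algA πl πn o t₁) × (algB πl πn o t₀ → algB πl πn o t₁)

/-- Strong decomposability of `(O, πl, πn)`. -/
def StronglyDecomposable : Type 1 :=
  ∀ d₀ d₁ : CTree K I (CTree K I Type),
    DTLe πl πn d₀ d₁ → STLe πl πn (CTree.mu d₀) (CTree.mu d₁)

/-- `πd` is an `α`-decomposition. -/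
def IsAlphaDecomposition (πd : O → Test (O × O)) : Type 1 :=
  ∀ (d : CTree K I (CTree K I Type)) (o : O),
    (algA πl πn o (CTree.mu d) →
      liftTest (fun p => liftTree πl πn p.1 (algA πl πn p.2) d) (πd o)) ×
    (liftTest (fun p => liftTree πl πn p.1 (algA πl πn p.2) d) (πd o) →
      algA πl πn o (CTree.mu d))

/-- `πd` is a `β`-decomposition. -/
def IsBetaDecomposition (πd : O → Test (O × O)) : Type 1 :=
  ∀ (d : CTree K I (CTree K I Type)) (o : O),
    (algB πl πn o (CTree.mu d) →
      liftTest (fun p => coliftTree πl πn p.1 (algB πl πn p.2) d) (πd o)) ×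
    (liftTest (fun p => coliftTree πl πn p.1 (algB πl πn p.2) d) (πd o) →
      algB πl πn o (CTree.mu d))

/-- The formula `(πd o)_α[φ]`. -/
def decompFormA (πd : O → Test (O × O)) (o : O) {τ : Ty} (φ : Form K I O .val τ) :
    Form K I O .cpt (.u τ) :=
  Form.mkTest (mapTest (fun p => .obsA p.1 (.thunk (.obsA p.2 φ))) (πd o))

/-- The formula `(πd o)_β[φ]`. -/
def decompFormB (πd : O → Test (O × O)) (o : O) {τ : Ty} (φ : Form K I O .val τ) :
    Form K I O .cpt (.u τ) :=
  Form.mkTest (mapTest (fun p => .obsB p.1 (.thunk (.obsB p.2 φ))) (πd o))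

end Decomp

section Sim

variable {K : Type} {I : K → Type} {O : Type}
variable (πl : O → Bool) (πn : (k : K) → O → Test (I k × O))

/-- Well-typed relations on terms. -/
def WtRel (K : Type) (I : K → Type) : Type 1 :=
  (b : Srt) → (τ : Ty) → Tm K I b τ → Tm K I b τ → Type

/-- Applicative `Γ`-simulations. -/
structure IsSimulation (R : WtRel K I) : Type 1 where
  natCond : ∀ n m : Tm K I .val .nat, R .val .nat n m → n = m
  arrowCond : ∀ {σ τ : Ty} (V W : Tm K I .val (.arrow σ τ)),
    R .val (.arrow σ τ) V W → ∀ U : Val K I σ, R .cpt τ (V U) (W U)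
  prodCond : ∀ {σ τ : Ty} (V W : Tm K I .val (.prod σ τ)),
    R .val (.prod σ τ) V W → R .val σ V.1 W.1 × R .val τ V.2 W.2
  thunkCond : ∀ {σ : Ty} (V W : Tm K I .val (.u σ)),
    R .val (.u σ) V W → R .cpt σ V W
  cptCond : ∀ {τ : Ty} (M N : Tm K I .cpt τ),
    R .cpt τ M N → Gamma πl πn (R .val τ) M N

/-- Applicative `Γ`-similarity. -/
def AppSimilar {b : Srt} {τ : Ty} (P Q : Tm K I b τ) : Type 1 :=
  Σ R : WtRel K I, IsSimulation πl πn R × R b τ P Q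

/-- Applicative `Γ`-bisimilarity. -/
def Bisimilar {b : Srt} {τ : Ty} (P Q : Tm K I b τ) : Type 1 :=
  Σ R : WtRel K I,
    IsSimulation πl πn R × (∀ b τ P Q, R b τ P Q → R b τ Q P) × R b τ P Q

end Sim

/-- Reflexive-transitive closure of a `Type`-valued relation. -/
inductive RTC {A : Type u} (R : A → A → Type u) : A → A → Type u
  | refl (a : A) : RTC R a a
  | tail {a b c : A} (h : RTC R a b) (h' : R b c) : RTC R a c

/-!
Fix an `R`-correct `f`. Mapping `map f` over the leaves turns the `dᵢ` into double trees of
types, and since `liftTree o f t` is `α o (map f t)` (likewise for `coliftTree` and `β`), the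
hypothesis `Γ(Γ(R)) d₀ d₁`, applied to the `Γ(R)`-correct predicates `liftTree o₁ f` and
`coliftTree o₁ f`, says exactly that the images are related by `⊑`. Strong decomposability
relates their multiplications, and naturality `μ ∘ map (map f) = map f ∘ μ` turns this back
into the implications between `liftTree o f (μ dᵢ)`, and between `coliftTree o f (μ dᵢ)`.
-/

universe v' w' s s'

theorem PFunctor.M.dest_injective {F : PFunctor.{v, w}} : Function.Injective (dest : F.M → _) :=
  fun x y h => by rw [← mk_dest x, ← mk_dest y, h]

namespace CTree

open PFunctor.M (dest_injective dest_corec)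

variable {K : Type} {I : K → Type} {A : Type v} {B : Type w}

def map (g : A → B) : CTree K I A → CTree K I B :=
  PFunctor.M.corec fun t =>
    match PFunctor.M.dest t with
    | ⟨Sum.inl a, _⟩ => ⟨Sum.inl (g a), PEmpty.elim⟩
    | ⟨Sum.inr k, ts⟩ => ⟨Sum.inr ⟨k.down⟩, fun i => ts ⟨i.down⟩⟩

@[elab_as_elim]
def cases {motive : CTree K I A → Sort*} (leaf : ∀ a, motive (leaf a))
    (node : ∀ k ts, motive (node k ts)) (t : CTree K I A) : motive t :=
  PFunctor.M.cases (fun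
    | ⟨Sum.inl a, ch⟩ => by
        obtain rfl : ch = PEmpty.elim := funext nofun
        exact leaf a
    | ⟨Sum.inr k, ts⟩ => node k.down fun i => ts ⟨i⟩) t

theorem leaf_injective : Function.Injective (leaf : A → CTree K I A) := fun _ _ h =>
  Sum.inl.inj (congrArg (fun t => (PFunctor.M.dest t).1) h)

theorem leaf_ne_node {a : A} {k : K} {ts : I k → CTree K I A} : leaf a ≠ node k ts := fun h =>
  Sum.inl_ne_inr (congrArg (fun t => (PFunctor.M.dest t).1) h)

theorem node_inj {k k' : K} {ts : I k → CTree K I A} {ts' : I k' → CTree K I A}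
    (h : node k ts = node k' ts') : k = k' ∧ HEq ts ts' := by
  obtain rfl : k = k' :=
    congrArg ULift.down (Sum.inr.inj (congrArg Sigma.fst (PFunctor.M.mk_inj h)))
  have hch := eq_of_heq (Sigma.mk.inj (PFunctor.M.mk_inj h)).2
  exact ⟨rfl, heq_of_eq (funext fun i => congrFun hch ⟨i⟩)⟩

theorem eq_of_bisim (R : CTree K I A → CTree K I A → Prop)
    (h : ∀ t t', R t t' → t = t' ∨ (∃ a, t = leaf a ∧ t' = leaf a) ∨
      ∃ k ts ts', t = node k ts ∧ t' = node k ts' ∧ ∀ i, R (ts i) (ts' i))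
    {t t' : CTree K I A} (r : R t t') : t = t' := by
  refine PFunctor.M.bisim (fun t t' => R t t' ∨ t = t') (fun t t' r => ?_) t t' (.inl r)
  rcases r with r | rfl
  · rcases h t t' r with rfl | ⟨a, rfl, rfl⟩ | ⟨k, ts, ts', rfl, rfl, hts⟩
    · exact ⟨_, _, _, rfl, rfl, fun _ => .inr rfl⟩
    · exact ⟨Sum.inl a, PEmpty.elim, PEmpty.elim, rfl, rfl, fun i => i.elim⟩
    · exact ⟨Sum.inr ⟨k⟩, _, _, rfl, rfl, fun i => .inl (hts i.down)⟩
  · exact ⟨_, _, _, rfl, rfl, fun _ => .inr rfl⟩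

@[simp]
theorem map_leaf (g : A → B) (a : A) : (leaf a : CTree K I A).map g = leaf (g a) :=
  dest_injective <| (dest_corec _ _).trans (Sigma.ext rfl (heq_of_eq (funext nofun)))

@[simp]
theorem map_node (g : A → B) (k : K) (ts : I k → CTree K I A) :
    (node k ts).map g = node k fun i => (ts i).map g :=
  dest_injective (dest_corec _ _)

-- `mu`'s coalgebra, written out so that `mu_eq_corec` holds by `rfl`.
def muStep (s : CTree K I (CTree K I A) ⊕ CTree K I A) :
    CTreeP K I A (CTree K I (CTree K I A) ⊕ CTree K I A) :=
  match s with
  | Sum.inl d' =>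
      match PFunctor.M.dest d' with
      | ⟨Sum.inl t, _⟩ =>
          (match PFunctor.M.dest t with
          | ⟨Sum.inl a, _⟩ => ⟨Sum.inl a, fun e => e.elim⟩
          | ⟨Sum.inr k, ts⟩ => ⟨Sum.inr k, fun i => Sum.inr (ts i)⟩)
      | ⟨Sum.inr k, ds⟩ => ⟨Sum.inr k, fun i => Sum.inl (ds i)⟩
  | Sum.inr t =>
      match PFunctor.M.dest t with
      | ⟨Sum.inl a, _⟩ => ⟨Sum.inl a, fun e => e.elim⟩
      | ⟨Sum.inr k, ts⟩ => ⟨Sum.inr k, fun i => Sum.inr (ts i)⟩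

theorem mu_eq_corec (d : CTree K I (CTree K I A)) : mu d = PFunctor.M.corec muStep (.inl d) :=
  rfl

theorem corec_muStep_inr (t : CTree K I A) : PFunctor.M.corec muStep (.inr t) = t := by
  refine eq_of_bisim (fun x y => x = PFunctor.M.corec muStep (.inr y)) ?_ rfl
  rintro _ t rfl
  induction t using cases with
  | leaf a =>
    exact .inr (.inl ⟨a, dest_injective <| (dest_corec _ _).trans
      (Sigma.ext rfl (heq_of_eq (funext nofun))), rfl⟩)
  | node k ts =>
    exact .inr (.inr ⟨k, _, ts, dest_injective (dest_corec _ _), rfl, fun i => rfl⟩)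

@[simp]
theorem mu_leaf (t : CTree K I A) : mu (leaf t : CTree K I (CTree K I A)) = t := by
  refine Eq.trans (dest_injective ?_) (corec_muStep_inr t)
  rw [mu_eq_corec, dest_corec, dest_corec]
  rfl

@[simp]
theorem mu_node (k : K) (ds : I k → CTree K I (CTree K I A)) :
    mu (node k ds) = node k fun i => mu (ds i) :=
  dest_injective (dest_corec _ _)

theorem mu_map_map (g : A → B) (d : CTree K I (CTree K I A)) :
    mu (d.map (map g)) = (mu d).map g := by
  refine eq_of_bisim (fun x y => ∃ d, x = mu (d.map (map g)) ∧ y = (mu d).map g) ?_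
    ⟨d, rfl, rfl⟩
  rintro _ _ ⟨d, rfl, rfl⟩
  induction d using cases with
  | leaf t => exact .inl (by simp)
  | node k ds =>
    simp only [map_node, mu_node]
    exact .inr (.inr ⟨k, _, _, rfl, rfl, fun i => ⟨ds i, rfl, rfl⟩⟩)

end CTree

namespace liftTest

variable {X : Type} {Q : X → Type w} {Q' : X → Type w'}

def map (f : ∀ x, Q x → Q' x) : {s : Test X} → liftTest Q s → liftTest Q' s
  | .atom x, q => f x q
  | .tru, _ => PUnit.unit
  | .and _ _, (l₁, l₂) => (map f l₁, map f l₂)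
  | .or _ _, .inl l => .inl (map f l)
  | .or _ _, .inr l => .inr (map f l)
  | .all _, ls => fun n => map f (ls n)
  | .ex _, ⟨n, l⟩ => ⟨n, map f l⟩

def sel : {s : Test X} → liftTest Q s → Sel s
  | .atom x, _ => .atom x
  | .tru, _ => .tru
  | .and _ _, (l₁, l₂) => .and (sel l₁) (sel l₂)
  | .or _ _, .inl l => .orl (sel l)
  | .or _ _, .inr l => .orr (sel l)
  | .all _, ls => .all fun n => sel (ls n)
  | .ex _, ⟨n, l⟩ => .ex n (sel l)

def get : {s : Test X} → (l : liftTest Q s) → {x : X} → Sel.At (sel l) x → Q x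
  | .atom _, q, _, .atom _ => q
  | .and _ _, (l₁, _), _, .andl h => get l₁ h
  | .and _ _, (_, l₂), _, .andr h => get l₂ h
  | .or _ _, .inl l, _, .orl h => get l h
  | .or _ _, .inr l, _, .orr h => get l h
  | .all _, ls, _, .all n h => get (ls n) h
  | .ex _, ⟨_, l⟩, _, .ex h => get l h

def ofSel : {s : Test X} → (c : Sel s) → (∀ x, Sel.At c x → Q x) → liftTest Q s
  | .atom x, .atom _, f => f x (.atom x)
  | .tru, .tru, _ => PUnit.unit
  | .and _ _, .and c₁ c₂, f =>
    (ofSel c₁ fun x h => f x (.andl h), ofSel c₂ fun x h => f x (.andr h))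
  | .or _ _, .orl c, f => .inl (ofSel c fun x h => f x (.orl h))
  | .or _ _, .orr c, f => .inr (ofSel c fun x h => f x (.orr h))
  | .all _, .all cs, f => fun n => ofSel (cs n) fun x h => f x (.all n h)
  | .ex _, .ex n c, f => ⟨n, ofSel c fun x h => f x (.ex h)⟩

end liftTest

section AlphaMap

variable {K : Type} {I : K → Type} {O : Type}
variable {πl : O → Bool} {πn : (k : K) → O → Test (I k × O)}
variable {A : Type v} {B : Type v'} {P : A → Type w} {Q : B → Type w'}

mutual

def Alpha.map (g : A → B) (hPQ : ∀ a, P a → Q (g a)) {o : O} {t : CTree K I A} :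
    Alpha πl πn P o t → Alpha πl πn Q o (t.map g)
  | .leaf b p => CTree.map_leaf g _ ▸ .leaf b (hPQ _ p)
  | .node ps => CTree.map_node g _ _ ▸ .node (AlphaT.map g hPQ ps)

def AlphaT.map (g : A → B) (hPQ : ∀ a, P a → Q (g a)) {k : K} {s : Test (I k × O)}
    {Ps : I k → CTree K I A} :
    AlphaT πl πn P s Ps → AlphaT πl πn Q s fun i => (Ps i).map g
  | .atom p => .atom (Alpha.map g hPQ p)
  | .tru => .tru
  | .and p₁ p₂ => .and (AlphaT.map g hPQ p₁) (AlphaT.map g hPQ p₂)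
  | .orl p => .orl (AlphaT.map g hPQ p)
  | .orr p => .orr (AlphaT.map g hPQ p)
  | .all ps => .all fun n => AlphaT.map g hPQ (ps n)
  | .ex n p => .ex n (AlphaT.map g hPQ p)

end

mutual

def Alpha.comap (g : A → B) (hQP : ∀ a, Q (g a) → P a) {o : O} {s : CTree K I B} :
    Alpha πl πn Q o s → (t : CTree K I A) → t.map g = s → Alpha πl πn P o t
  | .leaf b q, t, h => by
    induction t using CTree.cases with
    | leaf a =>
      rw [CTree.map_leaf] at h
      exact .leaf b (hQP a (CTree.leaf_injective h ▸ q))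
    | node k ts =>
      rw [CTree.map_node] at h
      exact (CTree.leaf_ne_node h.symm).elim
  | .node ps, t, h => by
    induction t using CTree.cases with
    | leaf a =>
      rw [CTree.map_leaf] at h
      exact (CTree.leaf_ne_node h).elim
    | node k ts =>
      rw [CTree.map_node] at h
      obtain ⟨hk, h⟩ := CTree.node_inj h
      subst k
      exact .node (AlphaT.comap g hQP ps ts (eq_of_heq h))

def AlphaT.comap (g : A → B) (hQP : ∀ a, Q (g a) → P a) {k : K} {s : Test (I k × O)}
    {Ps' : I k → CTree K I B} :
    AlphaT πl πn Q s Ps' → (Ps : I k → CTree K I A) → (fun i => (Ps i).map g) = Ps' →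
      AlphaT πl πn P s Ps
  | .atom (x := x) p, Ps, h => .atom (Alpha.comap g hQP p (Ps x) (congrFun h x))
  | .tru, _, _ => .tru
  | .and p₁ p₂, Ps, h => .and (AlphaT.comap g hQP p₁ Ps h) (AlphaT.comap g hQP p₂ Ps h)
  | .orl p, Ps, h => .orl (AlphaT.comap g hQP p Ps h)
  | .orr p, Ps, h => .orr (AlphaT.comap g hQP p Ps h)
  | .all ps, Ps, h => .all fun n => AlphaT.comap g hQP (ps n) Ps h
  | .ex n p, Ps, h => .ex n (AlphaT.comap g hQP p Ps h)

end

end AlphaMap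

section BetaStep

variable {K : Type} {I : K → Type} {O : Type}
variable (πl : O → Bool) (πn : (k : K) → O → Test (I k × O))
variable {A : Type v} (P : A → Type w)

-- One application of the rules `leaf_β`, `exep_β` and `node_β` of `β`, with `S` in the
-- recursive position; `Beta.dest` and `Beta.corec` make `Beta` its greatest fixed point.
inductive BetaStep (S : O → CTree K I A → Type s) : O → CTree K I A → Type (max v w s)
  | leaf {o : O} {a : A} (p : P a) : BetaStep S o (.leaf a)
  | exep {o : O} {a : A} (h : πl o = false) : BetaStep S o (.leaf a)
  | node {o : O} {k : K} {Ps : I k → CTree K I A}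
      (ps : liftTest (fun y : I k × O => S y.2 (Ps y.1)) (πn k o)) : BetaStep S o (.node k Ps)

variable {πl πn P}

theorem BetaWFStep.mono {R R' : BetaPf πl πn P → O → CTree K I A → Prop}
    (hRR : ∀ pf o t, R pf o t → R' pf o t) {pf : BetaPf πl πn P} {o : O} {t : CTree K I A}
    (h : BetaWFStep πl πn P R pf o t) : BetaWFStep πl πn P R' pf o t := by
  unfold BetaWFStep at *
  split at h
  · exact h
  · exact ⟨h.1, h.2.fst, fun x hx => hRR _ _ _ (h.2.snd x hx)⟩
  · exact h.elim

theorem BetaWF.dest {pf : BetaPf πl πn P} {o : O} {t : CTree K I A}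
    (h : BetaWF πl πn P pf o t) : BetaWFStep πl πn P (BetaWF πl πn P) pf o t :=
  let ⟨R, hR, hr⟩ := h
  (hR _ _ _ hr).mono fun _ _ _ r => ⟨R, hR, r⟩

def Beta.dest {o : O} {t : CTree K I A} (b : Beta πl πn P o t) :
    BetaStep πl πn P (Beta πl πn P) o t := by
  obtain ⟨pf, wf⟩ := b
  have hstep := wf.dest
  unfold BetaWFStep at hstep
  induction t using CTree.cases with
  | leaf a =>
    rcases hd : PFunctor.M.dest pf with ⟨⟨o', a', e⟩ | _, _⟩ <;> rw [hd] at hstep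
    · obtain ⟨rfl, rfl⟩ := hstep
      rcases e with p | h
      exacts [.leaf p, .exep h]
    · exact hstep.elim
  | node k ts =>
    rcases hd : PFunctor.M.dest pf with ⟨_ | ⟨k', o', c⟩, ch⟩ <;> rw [hd] at hstep
    · exact hstep.elim
    · obtain ⟨rfl, hnode⟩ := hstep
      obtain rfl : k' = k := hnode.fst
      exact .node (liftTest.ofSel c fun y hy => ⟨ch ⟨⟨y, hy⟩⟩, hnode.snd y hy⟩)

variable {S : O → CTree K I A → Type s}

def BetaStep.shape {o : O} {t : CTree K I A} :
    BetaStep πl πn P S o t → BetaPF πl πn P (Σ o t, S o t)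
  | .leaf (a := a) p => ⟨.inl ⟨o, a, .inl p⟩, PEmpty.elim⟩
  | .exep (a := a) h => ⟨.inl ⟨o, a, .inr h⟩, PEmpty.elim⟩
  | .node (k := k) (Ps := Ps) ps =>
    ⟨.inr ⟨k, o, ps.sel⟩, fun i => ⟨i.down.1.2, Ps i.down.1.1, ps.get i.down.2⟩⟩

def Beta.corec (step : ∀ {o t}, S o t → BetaStep πl πn P S o t) {o : O} {t : CTree K I A}
    (x : S o t) : Beta πl πn P o t := by
  let pf (x : Σ o t, S o t) : BetaPf πl πn P := PFunctor.M.corec (fun x => (step x.2.2).shape) x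
  refine ⟨pf ⟨o, t, x⟩, fun pf' o t => ∃ x : S o t, pf' = pf ⟨o, t, x⟩, ?_, x, rfl⟩
  rintro _ o t ⟨x, rfl⟩
  unfold BetaWFStep
  rw [PFunctor.M.dest_corec]
  generalize step x = st
  cases st with
  | leaf p => exact ⟨rfl, rfl⟩
  | exep h => exact ⟨rfl, rfl⟩
  | node ps => exact ⟨rfl, rfl, fun y hy => ⟨_, rfl⟩⟩

end BetaStep

section BetaMap

variable {K : Type} {I : K → Type} {O : Type}
variable {πl : O → Bool} {πn : (k : K) → O → Test (I k × O)}
variable {A : Type v} {B : Type v'} {P : A → Type w} {Q : B → Type w'}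
variable {S : O → CTree K I A → Type s} {S' : O → CTree K I B → Type s'}

def BetaStep.map (g : A → B) (hPQ : ∀ a, P a → Q (g a))
    (hS : ∀ o t, S o t → S' o (t.map g)) {o : O} {t : CTree K I A} :
    BetaStep πl πn P S o t → BetaStep πl πn Q S' o (t.map g)
  | .leaf p => CTree.map_leaf g _ ▸ .leaf (hPQ _ p)
  | .exep h => CTree.map_leaf g _ ▸ .exep h
  | .node ps => CTree.map_node g _ _ ▸ .node (ps.map fun y : I _ × O => hS y.2 _)

def BetaStep.comap (g : A → B) (hQP : ∀ a, Q (g a) → P a)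
    (hS : ∀ o t, S' o (t.map g) → S o t) {o : O} {s : CTree K I B}
    (st : BetaStep πl πn Q S' o s) (t : CTree K I A) (h : t.map g = s) :
    BetaStep πl πn P S o t := by
  induction t using CTree.cases with
  | leaf a =>
    rw [CTree.map_leaf] at h
    cases st with
    | leaf q => exact .leaf (hQP a (CTree.leaf_injective h ▸ q))
    | exep hl => exact .exep hl
    | node => exact (CTree.leaf_ne_node h).elim
  | node k ts =>
    rw [CTree.map_node] at h
    cases st with
    | leaf | exep => exact (CTree.leaf_ne_node h.symm).elim
    | node ps =>
      obtain ⟨rfl, h⟩ := CTree.node_inj h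
      cases eq_of_heq h
      exact .node (ps.map fun y : I k × O => hS y.2 _)

def Beta.map (g : A → B) (hPQ : ∀ a, P a → Q (g a)) {o : O} {t : CTree K I A}
    (b : Beta πl πn P o t) : Beta πl πn Q o (t.map g) :=
  Beta.corec (S := fun o t' => Σ' (t : CTree K I A) (_ : t.map g = t'), Beta πl πn P o t)
    (fun ⟨_, h, b⟩ => h ▸ b.dest.map g hPQ fun _ t b => ⟨t, rfl, b⟩) ⟨t, rfl, b⟩

def Beta.comap (g : A → B) (hQP : ∀ a, Q (g a) → P a) {o : O} {t : CTree K I A}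
    (b : Beta πl πn Q o (t.map g)) : Beta πl πn P o t :=
  Beta.corec (S := fun o t => Beta πl πn Q o (t.map g))
    (fun {_ t} b => b.dest.comap g hQP (fun _ _ => id) t rfl) b

end BetaMap

namespace Gamma

variable {K : Type} {I : K → Type} {O : Type}
variable {πl : O → Bool} {πn : (k : K) → O → Test (I k × O)}
variable {A : Type} {R : A → A → Type}

def dtLeMapMap {d₀ d₁ : CTree K I (CTree K I A)} (G : Gamma πl πn (Gamma πl πn R) d₀ d₁)
    {f : A → Type} (hf : RCorrect R f) :
    DTLe πl πn (d₀.map (CTree.map f)) (d₁.map (CTree.map f)) := by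
  intro o₀ o₁
  have hA : RCorrect (Gamma πl πn R) (liftTree πl πn o₁ f) := fun _ _ x γ =>
    (γ f hf o₁).1 x
  have hB : RCorrect (Gamma πl πn R) (coliftTree πl πn o₁ f) := fun _ _ x γ =>
    (γ f hf o₁).2 x
  refine ⟨fun x => ?_, fun x => ?_⟩
  · have x' : liftTree πl πn o₀ (liftTree πl πn o₁ f) d₀ :=
      Alpha.comap (CTree.map f) (fun t y => Alpha.comap f (fun _ => id) y t rfl) x d₀ rfl
    exact Alpha.map (CTree.map f) (fun _ y => Alpha.map f (fun _ => id) y) ((G _ hA o₀).1 x')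
  · have x' : coliftTree πl πn o₀ (coliftTree πl πn o₁ f) d₀ :=
      Beta.comap (CTree.map f) (fun _ => Beta.comap f fun _ => id) x
    exact Beta.map (CTree.map f) (fun _ y => Beta.map f (fun _ => id) y) ((G _ hB o₀).2 x')

end Gamma

/-- if `(O, πl, πn)` is strongly decomposable then
`Γ(Γ(R)) d₀ d₁` implies `Γ(R) (μ d₀) (μ d₁)`. -/
theorem gamma_mu_of_stronglyDecomposable
    {K : Type} {I : K → Type} {O : Type}
    (πl : O → Bool) (πn : (k : K) → O → Test (I k × O))
    (h : StronglyDecomposable πl πn)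
    {A : Type} (R : A → A → Type)
    (d₀ d₁ : CTree K I (CTree K I A)) :
    Nonempty (Gamma πl πn (Gamma πl πn R) d₀ d₁ → Gamma πl πn R (CTree.mu d₀) (CTree.mu d₁)) := by
  refine ⟨fun G f hf o => ?_⟩
  have hle := h _ _ (G.dtLeMapMap hf) o
  rw [CTree.mu_map_map, CTree.mu_map_map] at hle
  exact ⟨fun x => Alpha.comap f (fun _ => id) (hle.1 (Alpha.map f (fun _ => id) x)) _ rfl,
    fun x => Beta.comap f (fun _ => id) (hle.2 (Beta.map f (fun _ => id) x))⟩
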